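/- arXiv:2501.12953 — 3 statements merged into one kernel-verified Lean document; each statement's English description precedes it below -/
import Mathlib

section
/- Let H1 and H2 be two copies of a connected bipartite graph H with bipartition (A, B), let u ∈ A in H1 and v ∈ B in H2, and let G denote the graph obtained from the disjoint union of H1 and H2 by identifying u and v. Then for all n, z(n, n, H) ≤ ex(n, n, G), where z(n,n,H) = z(n,n,H[A,B]). -/
/-! A copy of `H ⊙ H` in a subgraph of `K_{n,n}` contains two copies of `H` through the image
`w` of the identified vertex: one sending `u ∈ A` to `w`, the other sending `v ∉ A` to `w`.
Two proper 2-colourings of a connected graph agree or are opposite everywhere, so a copy of the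
connected bipartite `H` in a bipartite host is sided as soon as one vertex lands on the correct
side. Whichever side `w` lies on, one of the two copies therefore puts `A` on the left. -/

/-- `H` has a copy inside `G`. -/
def Copies {W V : Type*} (H : SimpleGraph W) (G : SimpleGraph V) : Prop :=
  ∃ f : W → V, Function.Injective f ∧ ∀ a b, H.Adj a b → G.Adj (f a) (f b)

/-- The extremal number `ex(n, H)`: the maximum number of edges of an
`n`-vertex graph containing no copy of `H`. -/
noncomputable def exNum (n : ℕ) {W : Type*} (H : SimpleGraph W) : ℕ :=
  sSup {N | ∃ G : SimpleGraph (Fin n), ¬ Copies H G ∧ N = G.edgeSet.ncard}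

/-- The bipartite extremal number `ex(n, m, H)`: the maximum number of edges of
a subgraph of `K_{n,m}` containing no copy of `H`. -/
noncomputable def exBipNum (n m : ℕ) {W : Type*} (H : SimpleGraph W) : ℕ :=
  sSup {N | ∃ G : SimpleGraph (Fin n ⊕ Fin m),
    G ≤ completeBipartiteGraph (Fin n) (Fin m) ∧ ¬ Copies H G ∧ N = G.edgeSet.ncard}

/-- `G ≤ K_{n,m}` contains a copy of `H` in which the part `L` of `H` is
embedded into the part of size `n` (the left part) and its complement into the
part of size `m` (the right part). -/
def SidedCopies {W : Type*} (H : SimpleGraph W) (L : Set W) {n m : ℕ}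
    (G : SimpleGraph (Fin n ⊕ Fin m)) : Prop :=
  ∃ f : W → Fin n ⊕ Fin m, Function.Injective f ∧
    (∀ a b, H.Adj a b → G.Adj (f a) (f b)) ∧ ∀ a, a ∈ L ↔ (f a).isLeft = true

/-- The Zarankiewicz number `z(n, m, H[L, R])`: the maximum number of edges of
a subgraph of `K_{n,m}` containing no copy of `H` with `L` in the part of size
`n` and `R` in the part of size `m`. -/
noncomputable def zNum (n m : ℕ) {W : Type*} (H : SimpleGraph W) (L : Set W) : ℕ :=
  sSup {N | ∃ G : SimpleGraph (Fin n ⊕ Fin m),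
    G ≤ completeBipartiteGraph (Fin n) (Fin m) ∧ ¬ SidedCopies H L G ∧ N = G.edgeSet.ncard}


/-- Adjacency relation for the gluing of `H1` and `H2` obtained by identifying
`u ∈ V(H1)` with `v ∈ V(H2)`; the vertex `Sum.inl u` plays the role of the
identified vertex. -/
def glueRel {W1 W2 : Type*} (H1 : SimpleGraph W1) (H2 : SimpleGraph W2)
    (u : W1) (v : W2) : W1 ⊕ W2 → W1 ⊕ W2 → Prop
  | Sum.inl a, Sum.inl b => H1.Adj a b
  | Sum.inr a, Sum.inr b => H2.Adj a b
  | Sum.inl a, Sum.inr b => a = u ∧ H2.Adj v b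
  | Sum.inr a, Sum.inl b => b = u ∧ H2.Adj v a

/-- The graph `H1ᵘ ⊙ H2ᵛ` obtained from the disjoint union of `H1` and `H2`
by identifying `u` and `v`. -/
def glue {W1 W2 : Type*} (H1 : SimpleGraph W1) (H2 : SimpleGraph W2)
    (u : W1) (v : W2) : SimpleGraph {x : W1 ⊕ W2 // x ≠ Sum.inr v} where
  Adj a b := glueRel H1 H2 u v a.1 b.1
  symm := by
    constructor
    rintro ⟨a | a, ha⟩ ⟨b | b, hb⟩ h <;> simp only [glueRel] at h ⊢
    · exact h.symm
    · exact ⟨h.1, h.2⟩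
    · exact ⟨h.1, h.2⟩
    · exact h.symm
  loopless := by
    constructor
    rintro ⟨a | a, ha⟩ h <;> simp only [glueRel] at h
    · exact H1.irrefl h
    · exact H2.irrefl h

namespace SimpleGraph

theorem Coloring.congr_iff_of_connected {α : Type*} {G : SimpleGraph α} (hG : G.Connected)
    (c c' : G.Coloring Bool) (a b : α) : (c a ↔ c b) ↔ (c' a ↔ c' b) := by
  obtain ⟨p⟩ := hG a b
  rw [← c.even_length_iff_congr p, c'.even_length_iff_congr p]

end SimpleGraph

open SimpleGraph

section Glue

variable {W1 W2 : Type*} (H1 : SimpleGraph W1) (H2 : SimpleGraph W2) (u : W1) (v : W2)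

def glueLeft : H1 ↪g glue H1 H2 u v where
  toFun a := ⟨Sum.inl a, Sum.inl_ne_inr⟩
  inj' _ _ h := Sum.inl_injective (congrArg Subtype.val h)
  map_rel_iff' := Iff.rfl

def glueRight [DecidableEq W2] : H2 ↪g glue H1 H2 u v where
  toFun b := if h : b = v then ⟨Sum.inl u, Sum.inl_ne_inr⟩ else ⟨Sum.inr b, by simpa using h⟩
  inj' a b h := by
    by_cases ha : a = v <;> by_cases hb : b = v <;> simp_all
  map_rel_iff' {a b} := by
    by_cases ha : a = v <;> by_cases hb : b = v <;> simp_all [glue, glueRel, eq_comm, H2.adj_comm]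

theorem glueLeft_apply_eq_glueRight_apply [DecidableEq W2] :
    glueLeft H1 H2 u v u = glueRight H1 H2 u v v :=
  (dif_pos rfl : glueRight H1 H2 u v v = _).symm

end Glue

section Sided

variable {W : Type*} {H : SimpleGraph W} {A : Set W}

open Classical in
noncomputable def bicoloringOfSet (hbip : ∀ a b, H.Adj a b → (a ∈ A ↔ b ∉ A)) : H.Coloring Bool :=
  Coloring.mk (fun a => decide (a ∈ A)) fun {a b} hab => by
    have := hbip a b hab
    simp only [ne_eq, decide_eq_decide]
    tauto

variable {n m : ℕ} {G : SimpleGraph (Fin n ⊕ Fin m)}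

theorem sidedCopies_of_hom (hconn : H.Connected) (hbip : ∀ a b, H.Adj a b → (a ∈ A ↔ b ∉ A))
    (hG : G ≤ completeBipartiteGraph (Fin n) (Fin m)) (g : H →g G) (hg : Function.Injective g)
    {x : W} (hx : x ∈ A ↔ (g x).isLeft) : SidedCopies H A G := by
  classical
  refine ⟨g, hg, fun _ _ => g.map_adj, fun a => ?_⟩
  have key := (bicoloringOfSet hbip).congr_iff_of_connected hconn
    ((CompleteBipartiteGraph.bicoloring _ _).comp ((Hom.ofLE hG).comp g)) a x
  change (decide (a ∈ A) ↔ decide (x ∈ A)) ↔ ((g a).isRight ↔ (g x).isRight) at key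
  revert key hx
  cases g a <;> cases g x <;>
    simp only [Sum.isLeft_inl, Sum.isLeft_inr, Sum.isRight_inl, Sum.isRight_inr,
      decide_eq_true_eq, Bool.false_eq_true, iff_true, iff_false] <;> tauto

end Sided

theorem sidedCopies_of_copies_glue {W : Type*} {H : SimpleGraph W} {A : Set W}
    (hconn : H.Connected) (hbip : ∀ a b, H.Adj a b → (a ∈ A ↔ b ∉ A))
    {u v : W} (hu : u ∈ A) (hv : v ∉ A) {n m : ℕ} {G : SimpleGraph (Fin n ⊕ Fin m)}
    (hG : G ≤ completeBipartiteGraph (Fin n) (Fin m)) (hcopy : Copies (glue H H u v) G) :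
    SidedCopies H A G := by
  classical
  obtain ⟨f, hf, hadj⟩ := hcopy
  let F : glue H H u v →g G := ⟨f, hadj _ _⟩
  have hshared : F (glueLeft H H u v u) = F (glueRight H H u v v) :=
    congrArg F (glueLeft_apply_eq_glueRight_apply H H u v)
  by_cases hleft : (F (glueLeft H H u v u)).isLeft
  · exact sidedCopies_of_hom hconn hbip hG (F.comp (glueLeft H H u v).toHom)
      (hf.comp (glueLeft H H u v).injective) (x := u) (by simpa [hu] using hleft)
  · refine sidedCopies_of_hom hconn hbip hG (F.comp (glueRight H H u v).toHom)
      (hf.comp (glueRight H H u v).injective) (x := v) ?_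
    simpa [hv, hshared] using hleft

theorem zNum_le_exBipNum_of_forall_copies {W V : Type*} {H : SimpleGraph W} {L : Set W}
    {F : SimpleGraph V} {n m : ℕ}
    (h : ∀ G : SimpleGraph (Fin n ⊕ Fin m), G ≤ completeBipartiteGraph (Fin n) (Fin m) →
      Copies F G → SidedCopies H L G) :
    zNum n m H L ≤ exBipNum n m F := by
  refine csSup_le_csSup' ⟨Nat.card (Sym2 (Fin n ⊕ Fin m)), ?_⟩ ?_
  · rintro _ ⟨G, -, -, rfl⟩
    exact Set.ncard_le_card _
  · rintro _ ⟨G, hG, hfree, rfl⟩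
    exact ⟨G, hG, fun hcopy => hfree (h G hG hcopy), rfl⟩

/-- if `H1, H2` are copies of a connected bipartite graph `H` with
bipartition `(A, B)`, `u ∈ A`, `v ∈ B`, and `G = H1ᵘ ⊙ H2ᵛ`, then
`z(n, n, H[A, B]) ≤ ex(n, n, G)`. -/
theorem zNum_le_exBipNum_glue {W : Type*} (H : SimpleGraph W) (A : Set W)
    (hconn : H.Connected) (hbip : ∀ a b, H.Adj a b → (a ∈ A ↔ b ∉ A))
    (u v : W) (hu : u ∈ A) (hv : v ∉ A) (n : ℕ) :
    zNum n n H A ≤ exBipNum n n (glue H H u v) :=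
  zNum_le_exBipNum_of_forall_copies fun _ hG =>
    sidedCopies_of_copies_glue hconn hbip hu hv hG
end

section
/- For every integer r ≥ 2 there exists a finite bipartite graph which is r-degenerate, has exactly one vertex of degree r, and all other vertices of degree at least r + 1. -/
/-!
Give every vertex a level: `w` is at level 0, the vertices `z_S` at level 1, `Y` at level 2 and
`X` at level 3. Every edge joins consecutive levels, so the parity of the level is a
bipartition. Each vertex has at most `r` neighbours on its own level or above (`w` sees the `r`
vertices `z_S`, `z_S` sees `S`, a vertex of `Y` sees `X`), so in every vertex set a vertex of
lowest level has at most `r` neighbours inside the set. The degree bounds are direct counts: a vertex of `X`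
sees all of `Y`, `z_S` sees `S` and `w`, and a vertex `y ∈ Y` sees `X` together with some
`z_S` with `y ∈ S`, which exists because at least two `r`-subsets of `Y` are used once `r ≥ 2`.
-/

/-- A graph is `r`-degenerate if every (induced) subgraph has a vertex of
degree at most `r`. -/
def Degen (r : ℕ) {V : Type*} (G : SimpleGraph V) : Prop :=
  ∀ s : Finset V, s.Nonempty → ∃ v ∈ s, {w | w ∈ s ∧ G.Adj v w}.ncard ≤ r

section General

variable {V W : Type*} {r : ℕ}

theorem Degen.comap {G : SimpleGraph W} (f : V ↪ W) (hG : Degen r G) :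
    Degen r (G.comap f) := by
  intro s hs
  obtain ⟨_, hv, hle⟩ := hG (s.map f) hs.map
  obtain ⟨v, hvs, rfl⟩ := Finset.mem_map.mp hv
  refine ⟨v, hvs, le_trans ?_ hle⟩
  exact Set.ncard_le_ncard_of_injOn f (fun u ⟨hus, huv⟩ => ⟨by simpa using hus, huv⟩)
    f.injective.injOn ((s.map f).finite_toSet.subset fun _ hw => hw.1)

theorem Degen.of_level [Finite V] {G : SimpleGraph V} (level : V → ℕ)
    (h : ∀ v, {w | G.Adj v w ∧ level v ≤ level w}.ncard ≤ r) : Degen r G := by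
  intro s hs
  obtain ⟨v, hvs, hmin⟩ := s.exists_min_image level hs
  refine ⟨v, hvs, (Set.ncard_le_ncard ?_).trans (h v)⟩
  exact fun w ⟨hws, hvw⟩ => ⟨hvw, hmin w hws⟩

theorem exists_bipartition_of_level {G : SimpleGraph V} (level : V → ℕ)
    (h : ∀ a b, G.Adj a b → level a = level b + 1 ∨ level b = level a + 1) :
    ∃ s : Set V, ∀ a b, G.Adj a b → (a ∈ s ↔ b ∉ s) := by
  refine ⟨{v | Even (level v)}, fun a b hab => ?_⟩
  rcases h a b hab with hl | hl <;> simp [hl, Nat.even_add_one]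

theorem SimpleGraph.ncard_neighborSet_comap_equiv (G : SimpleGraph W) (e : V ≃ W) (v : V) :
    ((G.comap e).neighborSet v).ncard = (G.neighborSet (e v)).ncard :=
  Set.ncard_preimage_of_injective_subset_range e.injective (e.range_eq_univ ▸ Set.subset_univ _)

theorem Fin.exists_castSucc_ne {n : ℕ} (hn : 2 ≤ n) (j : Fin (n + 1)) :
    ∃ i : Fin n, i.castSucc ≠ j := by
  rcases eq_or_ne j 0 with rfl | hj
  · exact ⟨⟨1, hn⟩, Fin.ne_of_val_ne (by simp)⟩
  · exact ⟨⟨0, by omega⟩, by simpa [Fin.ext_iff] using hj.symm⟩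

end General

namespace CriticalGraph

/-- `z i` is the vertex `z_S` for `S = Y \ {y i.castSucc}`; the `r`-subset of `Y` left out is
`Y \ {y (Fin.last r)}`. -/
inductive Vertex (r : ℕ)
  | x : Fin r → Vertex r
  | y : Fin (r + 1) → Vertex r
  | z : Fin r → Vertex r
  | w : Vertex r

variable {r : ℕ}

instance : Finite (Vertex r) :=
  Finite.of_surjective
    (Sum.elim Vertex.x (Sum.elim Vertex.y (Sum.elim Vertex.z fun _ : Unit => .w)))
    (by rintro (i | j | i | _) <;> simp)

def Adj : Vertex r → Vertex r → Prop
  | .x _, .y _ | .y _, .x _ => True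
  | .y j, .z i | .z i, .y j => j ≠ i.castSucc
  | .z _, .w | .w, .z _ => True
  | _, _ => False

def graph (r : ℕ) : SimpleGraph (Vertex r) where
  Adj := Adj
  symm := ⟨fun a b => by cases a <;> cases b <;> simp [Adj]⟩
  loopless := ⟨fun a => by cases a <;> simp [Adj]⟩

def level : Vertex r → ℕ
  | .w => 0
  | .z _ => 1
  | .y _ => 2
  | .x _ => 3

theorem level_of_adj {a b : Vertex r} (h : (graph r).Adj a b) :
    level a = level b + 1 ∨ level b = level a + 1 := by
  cases a <;> cases b <;> simp_all [graph, Adj, level]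

theorem ncard_range_x : (Set.range (Vertex.x (r := r))).ncard = r := by
  simp [Set.ncard_range_of_injective fun _ _ => Vertex.x.inj]

theorem ncard_range_y : (Set.range (Vertex.y (r := r))).ncard = r + 1 := by
  simp [Set.ncard_range_of_injective fun _ _ => Vertex.y.inj]

theorem ncard_range_z : (Set.range (Vertex.z (r := r))).ncard = r := by
  simp [Set.ncard_range_of_injective fun _ _ => Vertex.z.inj]

theorem ncard_image_y_compl (j : Fin (r + 1)) : (Vertex.y '' {j}ᶜ).ncard = r := by
  rw [Set.ncard_image_of_injective _ fun _ _ => Vertex.y.inj, Set.ncard_compl,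
    Set.ncard_singleton]
  simp

theorem ncard_adj_of_level_le_le (v : Vertex r) :
    {u | (graph r).Adj v u ∧ level v ≤ level u}.ncard ≤ r := by
  cases v with
  | x i =>
    have : {u | (graph r).Adj (.x i) u ∧ level (.x i) ≤ level u} = ∅ := by
      ext u; cases u <;> simp [graph, Adj, level]
    simp [this]
  | y j =>
    refine (Set.ncard_le_ncard fun u hu => ?_).trans_eq ncard_range_x
    cases u <;> simp_all [graph, Adj, level]
  | z i =>
    refine (Set.ncard_le_ncard fun u hu => ?_).trans_eq (ncard_image_y_compl i.castSucc)
    cases u <;> simp_all [graph, Adj, level]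
  | w =>
    refine (Set.ncard_le_ncard fun u hu => ?_).trans_eq ncard_range_z
    cases u <;> simp_all [graph, Adj, level]

theorem degen : Degen r (graph r) :=
  Degen.of_level level ncard_adj_of_level_le_le

theorem ncard_neighborSet_w : ((graph r).neighborSet .w).ncard = r := by
  have : (graph r).neighborSet .w = Set.range Vertex.z := by
    ext u; cases u <;> simp [graph, Adj]
  rw [this, ncard_range_z]

theorem succ_le_ncard_neighborSet (hr : 2 ≤ r) {v : Vertex r} (hv : v ≠ .w) :
    r + 1 ≤ ((graph r).neighborSet v).ncard := by
  cases v with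
  | x i =>
    refine ncard_range_y ▸ Set.ncard_le_ncard fun u hu => ?_
    obtain ⟨j, rfl⟩ := hu
    simp [graph, Adj]
  | y j =>
    obtain ⟨i, hi⟩ := Fin.exists_castSucc_ne hr j
    calc r + 1 = (insert (Vertex.z i) (Set.range Vertex.x)).ncard := by
          rw [Set.ncard_insert_of_notMem (by simp), ncard_range_x]
      _ ≤ _ := Set.ncard_le_ncard <| by
          rintro u (rfl | ⟨k, rfl⟩) <;> simp [graph, Adj, hi.symm]
  | z i =>
    calc r + 1 = (insert Vertex.w (Vertex.y '' {i.castSucc}ᶜ)).ncard := by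
          rw [Set.ncard_insert_of_notMem (by simp), ncard_image_y_compl]
      _ ≤ _ := Set.ncard_le_ncard <| by
          rintro u (rfl | ⟨k, hk, rfl⟩) <;> simp_all [graph, Adj]
  | w => exact absurd rfl hv

end CriticalGraph

/-- for every `r ≥ 2` there is a finite bipartite graph which is
`r`-degenerate, has exactly one vertex of degree `r`, and all of whose other
vertices have degree at least `r + 1`. -/
theorem exists_critical_r_degenerate_bipartite (r : ℕ) (hr : 2 ≤ r) :
    ∃ (m : ℕ) (G : SimpleGraph (Fin m)),
      (∃ s : Set (Fin m), ∀ a b, G.Adj a b → (a ∈ s ↔ b ∉ s)) ∧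
      Degen r G ∧
      ∃ u : Fin m, (G.neighborSet u).ncard = r ∧
        ∀ w : Fin m, w ≠ u → r + 1 ≤ (G.neighborSet w).ncard := by
  obtain ⟨m, ⟨e⟩⟩ := Finite.exists_equiv_fin (CriticalGraph.Vertex r)
  refine ⟨m, (CriticalGraph.graph r).comap e.symm, ?_,
    CriticalGraph.degen.comap e.symm.toEmbedding, e .w, ?_, ?_⟩
  · exact exists_bipartition_of_level (CriticalGraph.level ∘ e.symm)
      fun _ _ h => CriticalGraph.level_of_adj h
  · rw [SimpleGraph.ncard_neighborSet_comap_equiv, e.symm_apply_apply,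
      CriticalGraph.ncard_neighborSet_w]
  · intro v hv
    rw [SimpleGraph.ncard_neighborSet_comap_equiv]
    exact CriticalGraph.succ_le_ncard_neighborSet hr (e.symm_apply_eq.not.mpr hv)
end

section
/- Let ε, C, α > 0. There exists N such that for every bipartite graph G with bipartition (L, R) on n ≥ N vertices with minimum degree δ(G) ≥ C·n^α, there exists a partition L = L1 ∪ L2 such that for every v ∈ R and each i ∈ {1,2}, | |N(v) ∩ L_i| − deg(v)/2 | ≤ ε·deg(v). -/
/-!
Color the vertices uniformly at random with two colors and split `L` into its two color classes.
Since `∑_f t ^ #{x ∈ s | f x = b} = (1 + t) ^ #s * 2 ^ #sᶜ`, Markov's inequality at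
`t = (1 + 2ε)²` shows that `s` receives more than `(1/2 + ε) #s` vertices of a given color for at
most a `ρ ^ #s` fraction of the colorings, where `ρ < 1` by Bernoulli's inequality. Every
neighborhood has at least `C n^α` vertices, so the union bound over the `2n` pairs
(vertex, color) leaves a failure probability of at most `2n ρ^(C n^α)`, which tends to `0`.
-/

open Finset Filter Topology

/-- The Chernoff rate `(1 + t) / (2 t^(1/2 + ε))` at `t = (1 + 2ε)²`. -/
noncomputable def balanceRate (ε : ℝ) : ℝ :=
  (1 + (1 + 2 * ε) ^ 2) / (2 * (1 + 2 * ε) ^ (1 + 2 * ε))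

theorem balanceRate_pos {ε : ℝ} (hε : 0 ≤ ε) : 0 < balanceRate ε := by
  unfold balanceRate
  positivity

theorem balanceRate_lt_one {ε : ℝ} (hε : 0 < ε) : balanceRate ε < 1 := by
  have hbernoulli : 1 + (1 + 2 * ε) * (2 * ε) ≤ (1 + 2 * ε) ^ (1 + 2 * ε) :=
    one_add_mul_self_le_rpow_one_add (by linarith) (by linarith)
  rw [balanceRate, div_lt_one (by positivity)]
  nlinarith

theorem tendsto_mul_rpow_mul_rpow_atTop_nhds_zero {r C α : ℝ} (hr0 : 0 < r) (hr1 : r < 1)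
    (hC : 0 < C) (hα : 0 < α) :
    Tendsto (fun x : ℝ => x * r ^ (C * x ^ α)) atTop (𝓝 0) := by
  have hb : 0 < -(C * Real.log r) := neg_pos.2 (mul_neg_of_pos_of_neg hC (Real.log_neg hr0 hr1))
  refine ((tendsto_rpow_mul_exp_neg_mul_atTop_nhds_zero α⁻¹ _ hb).comp
    (tendsto_rpow_atTop hα)).congr' ?_
  filter_upwards [eventually_ge_atTop 0] with x hx
  rw [Function.comp_apply, Real.rpow_rpow_inv hx hα.ne', Real.rpow_def_of_pos hr0]
  ring_nf

section Coloring

variable {α : Type*} [Fintype α] [DecidableEq α]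

theorem sum_pow_card_filter_eq_add_pow_mul {R : Type*} [CommSemiring R] (s : Finset α) (b : Bool) (t : R) :
    ∑ f : α → Bool, t ^ #{x ∈ s | f x = b} = (1 + t) ^ #s * 2 ^ #sᶜ := by
  have hterm (f : α → Bool) :
      t ^ #{x ∈ s | f x = b} = ∏ x, if x ∈ s ∧ f x = b then t else 1 := by
    rw [← prod_filter, prod_const]
    congr 2
    ext x
    simp
  have hfactor (x : α) :
      ∑ c : Bool, (if x ∈ s ∧ c = b then t else 1) = if x ∈ s then 1 + t else 2 := by
    cases b <;> by_cases hx : x ∈ s <;> simp [hx, one_add_one_eq_two, add_comm]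
  simp_rw [hterm, ← Fintype.prod_sum (fun x c => if x ∈ s ∧ c = b then t else 1), hfactor,
    prod_ite, prod_const]
  simp [compl_eq_univ_sdiff, filter_notMem_eq_sdiff]

theorem card_lt_card_filter_mul_rpow_le (s : Finset α) (b : Bool) {t : ℝ} (ht : 1 ≤ t)
    (m : ℝ) :
    #{f : α → Bool | m < #{x ∈ s | f x = b}} * t ^ m ≤ (1 + t) ^ #s * 2 ^ #sᶜ := by
  calc (#{f : α → Bool | m < #{x ∈ s | f x = b}} : ℝ) * t ^ m
      = ∑ f : α → Bool with m < #{x ∈ s | f x = b}, t ^ m := by rw [sum_const, nsmul_eq_mul]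
    _ ≤ ∑ f : α → Bool with m < #{x ∈ s | f x = b}, t ^ #{x ∈ s | f x = b} := by
        refine sum_le_sum fun f hf => ?_
        rw [← Real.rpow_natCast]
        exact Real.rpow_le_rpow_of_exponent_le ht (mem_filter.1 hf).2.le
    _ ≤ ∑ f : α → Bool, t ^ #{x ∈ s | f x = b} :=
        sum_le_sum_of_subset_of_nonneg (filter_subset _ _) fun _ _ _ => by positivity
    _ = (1 + t) ^ #s * 2 ^ #sᶜ := sum_pow_card_filter_eq_add_pow_mul s b t

theorem card_half_add_mul_lt_card_filter_le (s : Finset α) (b : Bool) {ε : ℝ} (hε : 0 ≤ ε) :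
    (#{f : α → Bool | (1 / 2 + ε) * #s < #{x ∈ s | f x = b}} : ℝ) ≤
      balanceRate ε ^ #s * 2 ^ Fintype.card α := by
  have hbase : 0 < 1 + 2 * ε := by linarith
  have hpow : ((1 + 2 * ε) ^ 2) ^ ((1 / 2 + ε) * #s) = ((1 + 2 * ε) ^ (1 + 2 * ε)) ^ #s := by
    rw [← Real.rpow_natCast _ 2, ← Real.rpow_mul hbase.le, ← Real.rpow_natCast _ #s,
      ← Real.rpow_mul hbase.le]
    ring_nf
  have hmarkov := card_lt_card_filter_mul_rpow_le s b (t := (1 + 2 * ε) ^ 2)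
    (one_le_pow₀ (by linarith)) ((1 / 2 + ε) * #s)
  rw [hpow, ← le_div_iff₀ (by positivity)] at hmarkov
  refine hmarkov.trans_eq ?_
  rw [balanceRate, div_pow, mul_pow, ← card_add_card_compl s, pow_add]
  field_simp

theorem exists_forall_abs_card_filter_sub_half_le {ι : Type*} [Fintype ι] (s : ι → Finset α)
    {ε m : ℝ} (hε : 0 < ε) (hm : ∀ i, m ≤ #(s i))
    (h : 2 * Fintype.card ι * balanceRate ε ^ m < 1) :
    ∃ f : α → Bool, ∀ i b, |(#{x ∈ s i | f x = b} : ℝ) - #(s i) / 2| ≤ ε * #(s i) := by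
  set r := balanceRate ε
  let bad : ι × Bool → Finset (α → Bool) := fun p =>
    {f | (1 / 2 + ε) * #(s p.1) < #{x ∈ s p.1 | f x = p.2}}
  have hbad (p : ι × Bool) : (#(bad p) : ℝ) ≤ r ^ m * 2 ^ Fintype.card α := by
    refine (card_half_add_mul_lt_card_filter_le (s p.1) p.2 hε.le).trans ?_
    gcongr
    rw [← Real.rpow_natCast]
    exact Real.rpow_le_rpow_of_exponent_ge (balanceRate_pos hε.le) (balanceRate_lt_one hε).le
      (hm p.1)
  have hcard : #(univ.biUnion bad) < #(univ : Finset (α → Bool)) := by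
    have : (#(univ.biUnion bad) : ℝ) < 2 ^ Fintype.card α :=
      calc (#(univ.biUnion bad) : ℝ) ≤ ∑ p, (#(bad p) : ℝ) := by exact_mod_cast card_biUnion_le
        _ ≤ ∑ _p : ι × Bool, r ^ m * 2 ^ Fintype.card α := sum_le_sum fun p _ => hbad p
        _ = 2 * Fintype.card ι * r ^ m * 2 ^ Fintype.card α := by
            simp only [sum_const, card_univ, Fintype.card_prod, Fintype.card_bool]
            ring
        _ < 2 ^ Fintype.card α := by
            rw [mul_lt_iff_lt_one_left (by positivity)]
            exact h
    rw [card_univ, Fintype.card_fun, Fintype.card_bool]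
    exact_mod_cast this
  obtain ⟨f, -, hf⟩ := exists_mem_notMem_of_card_lt_card hcard
  have hle (i : ι) (b : Bool) : (#{x ∈ s i | f x = b} : ℝ) ≤ (1 / 2 + ε) * #(s i) := by
    by_contra hlt
    exact hf (mem_biUnion.2 ⟨(i, b), mem_univ _, by simpa [bad] using hlt⟩)
  refine ⟨f, fun i b => abs_sub_le_iff.2 ⟨by linarith [hle i b], ?_⟩⟩
  have hsplit : (#{x ∈ s i | f x = b} : ℝ) + #{x ∈ s i | f x = !b} = #(s i) := by
    rw [← card_filter_add_card_filter_not (s := s i) (fun x => f x = b)]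
    simp [Bool.eq_not_iff]
  linarith [hle i (!b)]

end Coloring

theorem ncard_coe_inter_sep {V : Type*} {s : Finset V} {L : Set V} (hs : ↑s ⊆ L) (p : V → Prop)
    [DecidablePred p] : ((s : Set V) ∩ {x ∈ L | p x}).ncard = #{x ∈ s | p x} := by
  rw [← Set.ncard_coe_finset, coe_filter]
  congr 1
  ext x
  exact ⟨fun h => ⟨h.1, h.2.2⟩, fun h => ⟨h.1, hs h.1, h.2⟩⟩

/-- for all `ε, C, α > 0` there is `N` such that every bipartite
graph `G` on `n ≥ N` vertices with parts `(L, R)` and minimum degree at least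
`C·n^α` admits an `ε`-good partition `L = L1 ∪ L2`, i.e. one satisfying
`| |N(v) ∩ Li| − deg(v)/2 | ≤ ε·deg(v)` for every `v ∈ R` and `i = 1, 2`. -/
theorem exists_good_partition (ε C α : ℝ) (hε : 0 < ε) (hC : 0 < C) (hα : 0 < α) :
    ∃ N : ℕ, ∀ n : ℕ, N ≤ n → ∀ (G : SimpleGraph (Fin n)) (L : Set (Fin n)),
      (∀ a b, G.Adj a b → (a ∈ L ↔ b ∉ L)) →
      (∀ v : Fin n, C * (n : ℝ) ^ α ≤ ((G.neighborSet v).ncard : ℝ)) →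
      ∃ L1 L2 : Set (Fin n), Disjoint L1 L2 ∧ L1 ∪ L2 = L ∧
        ∀ v : Fin n, v ∉ L →
          |(((G.neighborSet v ∩ L1).ncard : ℝ)) - ((G.neighborSet v).ncard : ℝ) / 2| ≤
              ε * ((G.neighborSet v).ncard : ℝ) ∧
          |(((G.neighborSet v ∩ L2).ncard : ℝ)) - ((G.neighborSet v).ncard : ℝ) / 2| ≤
              ε * ((G.neighborSet v).ncard : ℝ) := by
  classical
  obtain ⟨N, hN⟩ := eventually_atTop.1 <|
    ((tendsto_mul_rpow_mul_rpow_atTop_nhds_zero (balanceRate_pos hε.le) (balanceRate_lt_one hε)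
      hC hα).comp tendsto_natCast_atTop_atTop).eventually (gt_mem_nhds one_half_pos)
  refine ⟨N, fun n hn G L hbip hdeg => ?_⟩
  simp_rw [← SimpleGraph.coe_neighborFinset, Set.ncard_coe_finset] at hdeg ⊢
  have hsmall := hN n hn
  rw [Function.comp_apply] at hsmall
  obtain ⟨f, hf⟩ := exists_forall_abs_card_filter_sub_half_le (G.neighborFinset ·) hε hdeg
    (by rw [Fintype.card_fin]; linarith)
  refine ⟨{x ∈ L | f x = true}, {x ∈ L | f x = false}, ?_, ?_, fun v hv => ?_⟩
  · exact Set.disjoint_left.2 fun x h₁ h₂ => by simp_all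
  · ext x
    rcases Bool.eq_false_or_eq_true (f x) with h | h <;> simp [h]
  · have hL : ↑(G.neighborFinset v) ⊆ L := fun x hx => by
      simpa [hv] using hbip v x (G.mem_neighborFinset v x |>.1 hx)
    rw [ncard_coe_inter_sep hL, ncard_coe_inter_sep hL]
    exact ⟨hf v true, hf v false⟩
end
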